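/- arXiv:1606.03618 — 2 statements merged into one kernel-verified Lean document; each statement's English description precedes it below -/
import Mathlib

section
/- Let G be a finite group, H a subgroup of index 2, E an algebraically closed field of characteristic coprime to |G|, and χ, χ' : H → E^* characters with χ ≠ χ^c. Then Ind_H^G χ ≅ Ind_H^G χ' if and only if χ' = χ or χ' = χ^c. -/
/-!
An equivariant isomorphism `e` sends `v` to a nonzero vector of `V'` on which `H` acts through
`χ`. In the basis `(v', ρ' c v')` both vectors are `H`-eigenvectors, with characters `χ'` and
`h ↦ χ' (c⁻¹ h c)`, and comparing coefficients shows that a simultaneous eigenvector with a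
nonzero coordinate has that coordinate's character; so `χ` is one of the two.

Conversely, let `u ∈ V'` be an `H`-eigenvector with character `χ` such that `(u, ρ' c u)` is a
basis (`u = v'` if `χ' = χ`, `u = ρ' c v'` if `χ' = χ^c`). The linear map `f` with `v ↦ u`,
`ρ c v ↦ ρ' c u` satisfies `f (ρ g v) = ρ' g u` for every `g`, because each `g ∉ H` is `c` times
an element of `H`; since the translates of `v` span `V`, `f` is equivariant.
-/

open Submodule

theorem Module.End.eq_or_eq_of_mem_span_pair_of_eigenvectors {ι E W : Type*} [Field E]
    [AddCommGroup W] [Module E W] (T : ι → Module.End E W) {x y z : W}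
    (hxy : LinearIndependent E ![x, y]) (hz : z ∈ span E {x, y}) (hz₀ : z ≠ 0)
    {α β γ : ι → E} (hx : ∀ i, T i x = α i • x) (hy : ∀ i, T i y = β i • y)
    (hzγ : ∀ i, T i z = γ i • z) : γ = α ∨ γ = β := by
  obtain ⟨a, b, rfl⟩ := mem_span_pair.1 hz
  have hcoeff : ∀ i, a * α i = γ i * a ∧ b * β i = γ i * b := fun i => by
    have h := hzγ i
    rw [map_add, map_smul, map_smul, hx, hy, smul_add, smul_smul, smul_smul, smul_smul,
      smul_smul] at h
    have := LinearIndependent.pair_iff.1 hxy (a * α i - γ i * a) (b * β i - γ i * b) (by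
      rw [sub_smul, sub_smul, sub_add_sub_comm, h, sub_self])
    exact ⟨sub_eq_zero.1 this.1, sub_eq_zero.1 this.2⟩
  rcases ne_or_eq a 0 with ha | rfl
  · exact .inl <| funext fun i => (mul_right_cancel₀ ha <| by rw [mul_comm, (hcoeff i).1]).symm
  rcases ne_or_eq b 0 with hb | rfl
  · exact .inr <| funext fun i => (mul_right_cancel₀ hb <| by rw [mul_comm, (hcoeff i).2]).symm
  · exact absurd (by simp) hz₀

namespace Representation

variable {G E V V' : Type*} [Group G] [Field E] [AddCommGroup V] [Module E V]
  [AddCommGroup V'] [Module E V'] (ρ : Representation E G V) (ρ' : Representation E G V')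

theorem apply_apply_eq_smul_of_conj_apply_eq_smul {c g : G} {u : V} {a : E}
    (h : ρ (c⁻¹ * g * c) u = a • u) : ρ g (ρ c u) = a • ρ c u := by
  rw [← Module.End.mul_apply, ← map_mul, ← mul_inv_cancel_left c (g * c), ← mul_assoc c⁻¹,
    map_mul, Module.End.mul_apply, h, map_smul]

theorem linearIndependent_pair_apply (g : G) {x y : V} (h : LinearIndependent E ![x, y]) :
    LinearIndependent E ![ρ g x, ρ g y] := by
  have hcomp : ρ g ∘ ![x, y] = ![ρ g x, ρ g y] := by ext i; fin_cases i <;> rfl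
  exact hcomp ▸ h.map' (ρ g) (LinearMap.ker_eq_bot.2 (ρ.apply_bijective g).1)

theorem span_pair_apply_eq_top (g : G) {x y : V} (h : span E {x, y} = ⊤) :
    span E {ρ g x, ρ g y} = ⊤ := by
  rw [← Set.image_pair, span_image, h, Submodule.map_top, LinearMap.range_eq_top]
  exact (ρ.apply_bijective g).2

theorem span_range_apply_eq_top {x : V} (c : G) (h : span E {x, ρ c x} = ⊤) :
    span E (Set.range fun g => ρ g x) = ⊤ :=
  eq_top_mono (span_mono <| Set.insert_subset_iff.2 ⟨⟨1, by simp⟩, by simp⟩) h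

theorem intertwines_of_map_apply_eq_apply (f : V →ₗ[E] V') {x : V} {u : V'}
    (hx : span E (Set.range fun g => ρ g x) = ⊤) (hf : ∀ g, f (ρ g x) = ρ' g u) (g : G) (y : V) :
    f (ρ g y) = ρ' g (f y) := by
  have : f ∘ₗ ρ g = ρ' g ∘ₗ f := LinearMap.ext_on hx <| by
    rintro _ ⟨k, rfl⟩
    simp only [LinearMap.comp_apply, ← Module.End.mul_apply, ← map_mul, hf]
  exact LinearMap.congr_fun this y

variable {H : Subgroup G} {c : G}

theorem map_apply_eq_apply_of_index_eq_two (hH : H.index = 2) (hc : c ∉ H) (f : V →ₗ[E] V')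
    (χ : H → E) {x : V} {u : V'} (hx : ∀ h : H, ρ h x = χ h • x) (hu : ∀ h : H, ρ' h u = χ h • u)
    (hfx : f x = u) (hfc : f (ρ c x) = ρ' c u) (g : G) : f (ρ g x) = ρ' g u := by
  by_cases hg : g ∈ H
  · rw [hx ⟨g, hg⟩, map_smul, hfx, hu ⟨g, hg⟩]
  · have hcg : c⁻¹ * g ∈ H := (Subgroup.mul_mem_iff_of_index_two hH).2 (by simp [hg, hc])
    obtain ⟨h, rfl⟩ : ∃ h : H, g = c * h := ⟨⟨c⁻¹ * g, hcg⟩, by simp⟩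
    rw [map_mul, map_mul, Module.End.mul_apply, Module.End.mul_apply, hx, hu, map_smul, map_smul,
      hfc, map_smul]

theorem exists_equiv_of_eigenvector_pair (hH : H.index = 2) (hc : c ∉ H) (χ : H → E) {x : V}
    {u : V'} (hx : ∀ h : H, ρ h x = χ h • x) (hu : ∀ h : H, ρ' h u = χ h • u)
    (hxli : LinearIndependent E ![x, ρ c x]) (hxspan : span E {x, ρ c x} = ⊤)
    (huli : LinearIndependent E ![u, ρ' c u]) (huspan : span E {u, ρ' c u} = ⊤) :
    ∃ e : V ≃ₗ[E] V', ∀ (g : G) (y : V), e (ρ g y) = ρ' g (e y) := by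
  let b : Module.Basis (Fin 2) E V :=
    Module.Basis.mk hxli (by rw [Matrix.range_cons_cons_empty, hxspan])
  let b' : Module.Basis (Fin 2) E V' :=
    Module.Basis.mk huli (by rw [Matrix.range_cons_cons_empty, huspan])
  let e := b.equiv b' (.refl _)
  have he : ∀ i, e (b i) = b' i := fun i => b.equiv_apply i b' (.refl _)
  simp only [b, b', Module.Basis.mk_apply, Fin.forall_fin_two] at he
  exact ⟨e, ρ.intertwines_of_map_apply_eq_apply ρ' e.toLinearMap
    (ρ.span_range_apply_eq_top c hxspan)
    (ρ.map_apply_eq_apply_of_index_eq_two ρ' hH hc e.toLinearMap χ hx hu he.1 he.2)⟩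

end Representation

theorem stmt7_general (G : Type*) [Group G] (H : Subgroup G) (hH : H.index = 2)
    (hnorm : H.Normal) (c : G) (hc : c ∉ H)
    (E : Type*) [Field E]
    (χ χ' : H →* Eˣ)
    (V : Type*) [AddCommGroup V] [Module E V] (ρ : Representation E G V)
    (v : V) (hv : v ≠ 0)
    (heig : ∀ h : H, ρ (h : G) v = (χ h : E) • v)
    (hnotline : ¬ ∃ a : E, ρ c v = a • v)
    (hspan : Submodule.span E {v, ρ c v} = ⊤)
    (V' : Type*) [AddCommGroup V'] [Module E V'] (ρ' : Representation E G V')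
    (v' : V') (hv' : v' ≠ 0)
    (heig' : ∀ h : H, ρ' (h : G) v' = (χ' h : E) • v')
    (hnotline' : ¬ ∃ a : E, ρ' c v' = a • v')
    (hspan' : Submodule.span E {v', ρ' c v'} = ⊤) :
    (∃ e : V ≃ₗ[E] V', ∀ (g : G) (x : V), e (ρ g x) = ρ' g (e x)) ↔
      (χ' = χ ∨ ∀ h : H, χ' h = χ ⟨c * h * c⁻¹, hnorm.conj_mem h.1 h.2 c⟩) := by
  let σ := MulAut.conjNormal (H := H) c
  change _ ↔ χ' = χ ∨ ∀ h : H, χ' h = χ (σ h)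
  have li := (LinearIndependent.pair_iff' hv).2 fun a ha => hnotline ⟨a, ha.symm⟩
  have li' := (LinearIndependent.pair_iff' hv').2 fun a ha => hnotline' ⟨a, ha.symm⟩
  have heigc' : ∀ h : H, ρ' h (ρ' c v') = (χ' (σ.symm h) : E) • ρ' c v' := fun h =>
    ρ'.apply_apply_eq_smul_of_conj_apply_eq_smul <| by
      rw [← MulAut.conjNormal_symm_apply]; exact heig' _
  constructor
  · rintro ⟨e, he⟩
    have hev : e v ≠ 0 := by simpa using hv
    rcases Module.End.eq_or_eq_of_mem_span_pair_of_eigenvectors (fun h : H => ρ' h) li'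
      (hspan' ▸ mem_top) hev heig' heigc' (fun h => by rw [← he, heig, map_smul]) with hχ | hχ
    · exact .inl <| MonoidHom.ext fun h => Units.ext (congrFun hχ h).symm
    · refine .inr fun h => Units.ext ?_
      simpa using (congrFun hχ (σ h)).symm
  · rintro (rfl | hconj)
    · exact ρ.exists_equiv_of_eigenvector_pair ρ' hH hc _ heig heig' li hspan li' hspan'
    · refine ρ.exists_equiv_of_eigenvector_pair ρ' hH hc _ heig (fun h => ?_) li hspan
        (ρ'.linearIndependent_pair_apply c li') (ρ'.span_pair_apply_eq_top c hspan')
      rw [heigc', hconj, MulEquiv.apply_symm_apply]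

/-- Let `G` be a finite group, `H` a subgroup of index 2, `c ∈ G \ H`, `E` an
algebraically closed field of characteristic coprime to `|G|`, and `χ, χ' : H → Eˣ`
characters with `χ ≠ χ^c`.  Then `Ind_H^G χ ≅ Ind_H^G χ'` if and only if `χ' = χ` or
`χ' = χ^c`.  The induced representations are realized concretely: `ρ` (resp. `ρ'`) acts
on `V` (resp. `V'`) with a vector `v` (resp. `v'`) on which `H` acts through `χ`
(resp. `χ'`) and such that `(v, ρ c v)` (resp. `(v', ρ' c v')`) is a basis. -/
theorem stmt7 (G : Type*) [Group G] [Fintype G] (H : Subgroup G) (hH : H.index = 2)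
    (hnorm : H.Normal) (c : G) (hc : c ∉ H)
    (E : Type*) [Field E] [IsAlgClosed E] (hchar : ¬ (ringChar E ∣ Fintype.card G))
    (χ χ' : H →* Eˣ)
    (hχ : ∃ h : H, χ ⟨c * h * c⁻¹, hnorm.conj_mem h.1 h.2 c⟩ ≠ χ h)
    (V : Type*) [AddCommGroup V] [Module E V] (ρ : Representation E G V)
    (v : V) (hv : v ≠ 0)
    (heig : ∀ h : H, ρ (h : G) v = (χ h : E) • v)
    (hnotline : ¬ ∃ a : E, ρ c v = a • v)
    (hspan : Submodule.span E {v, ρ c v} = ⊤)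
    (V' : Type*) [AddCommGroup V'] [Module E V'] (ρ' : Representation E G V')
    (v' : V') (hv' : v' ≠ 0)
    (heig' : ∀ h : H, ρ' (h : G) v' = (χ' h : E) • v')
    (hnotline' : ¬ ∃ a : E, ρ' c v' = a • v')
    (hspan' : Submodule.span E {v', ρ' c v'} = ⊤) :
    (∃ e : V ≃ₗ[E] V', ∀ (g : G) (x : V), e (ρ g x) = ρ' g (e x)) ↔
      (χ' = χ ∨ ∀ h : H, χ' h = χ ⟨c * h * c⁻¹, hnorm.conj_mem h.1 h.2 c⟩) :=
  stmt7_general G H hH hnorm c hc E χ χ' V ρ v hv heig hnotline hspan V' ρ' v' hv' heig' hnotline'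
    hspan'
end

section
/- Let G be a group, H an index-2 subgroup, E an algebraically closed field of characteristic ≠ 2, and χ : H → E^* a homomorphism with finite image. Then the induced representation ρ = Ind_H^G χ is semisimple; moreover if χ = χ^c then ρ is isomorphic to a direct sum of two characters of G, namely the two extensions of χ to G. -/
/-!
In the basis `(v, ρ c v)` the subgroup `H` acts diagonally, by `χ` and `χ^c`, and `c` acts by the
companion matrix of `X² - k` with `k = χ (c²) ≠ 0`. So the eigenlines of `ρ c` are spanned by
`t • v + ρ c v` with `t² = k`, and such a line is `H`-stable only if `χ = χ^c`. Hence a proper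
invariant subspace exists only when `χ = χ^c`, and then the two lines for `± t` (distinct since
`char E ≠ 2`) are invariant, complementary, and carry the two extensions of `χ`, with values
`± t` at `c`.
-/

section LinearAlgebra

open Submodule Module

variable {E V : Type*} [Field E] [AddCommGroup V] [Module E V] {v w : V}

theorem finrank_eq_two_of_linearIndependent_pair (hli : LinearIndependent E ![v, w])
    (hspan : span E {v, w} = ⊤) : finrank E V = 2 := by
  have := finrank_span_eq_card hli
  rw [Matrix.range_cons, Matrix.range_cons, Matrix.range_empty, Set.union_empty,
    Set.singleton_union, hspan, finrank_top] at this
  simpa using this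

theorem exists_eq_span_singleton_of_finrank_eq_two (hV : finrank E V = 2) {W : Submodule E V}
    (hbot : W ≠ ⊥) (htop : W ≠ ⊤) : ∃ u ≠ 0, W = E ∙ u := by
  have : FiniteDimensional E V := finite_of_finrank_pos (by omega)
  have hlt : finrank E W < 2 := hV ▸ finrank_lt htop
  have hne : finrank E W ≠ 0 := fun h => hbot (finrank_eq_zero.mp h)
  obtain ⟨u, huW, hu0⟩ := Submodule.exists_mem_ne_zero_of_ne_bot hbot
  exact ⟨u, hu0, eq_span_singleton_of_mem_of_finrank_eq_one (by omega) huW hu0⟩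

theorem smul_add_ne_zero_of_linearIndependent_pair (hli : LinearIndependent E ![v, w]) (t : E) :
    t • v + w ≠ 0 := fun h =>
  one_ne_zero (hli.eq_zero_of_pair (s := t) (t := 1) (by rwa [one_smul])).2

theorem isCompl_span_smul_add_of_ne (hli : LinearIndependent E ![v, w])
    (hspan : span E {v, w} = ⊤) {a b : E} (hab : a ≠ b) :
    IsCompl (E ∙ (a • v + w)) (E ∙ (b • v + w)) := by
  have hli' : LinearIndependent E ![a • v + (1 : E) • w, b • v + (1 : E) • w] :=
    (LinearIndependent.pair_add_smul_add_smul_iff a 1 b 1).mpr ⟨hli, by simpa using hab⟩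
  have hspan' := hli'.span_eq_top_of_card_eq_finrank
    (by rw [finrank_eq_two_of_linearIndependent_pair hli hspan, Fintype.card_fin])
  have hst : IsCompl ({0} : Set (Fin 2)) {1} := by
    rw [isCompl_iff, Set.disjoint_singleton, codisjoint_iff]
    refine ⟨by decide, Set.eq_univ_of_forall fun i => ?_⟩
    fin_cases i <;> simp
  simpa using hli'.isCompl_span_image hspan' hst

theorem ne_neg_of_two_ne_zero {t : E} (h2 : (2 : E) ≠ 0) (ht : t ≠ 0) : t ≠ -t := fun h =>
  ht ((mul_eq_zero.mp (by linear_combination h : (2 : E) * t = 0)).resolve_left h2)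

theorem eq_mul_self_and_span_eq_of_apply_eq_smul {f : Module.End E V} {u : V} {k t : E}
    (hli : LinearIndependent E ![v, w]) (hspan : span E {v, w} = ⊤) (hfv : f v = w)
    (hfw : f w = k • v) (hu : u ≠ 0) (hfu : f u = t • u) :
    k = t * t ∧ E ∙ u = E ∙ (t • v + w) := by
  obtain ⟨a, b, rfl⟩ := mem_span_pair.mp (hspan ▸ mem_top : u ∈ span E {v, w})
  rw [map_add, map_smul, map_smul, hfv, hfw] at hfu
  have hcoeff : b * k = t * a ∧ a = t * b := hli.eq_of_pair <| by
    linear_combination (norm := module) hfu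
  have hb : b ≠ 0 := by
    rintro rfl
    apply hu
    simp [hcoeff.2]
  refine ⟨mul_left_cancel₀ hb ?_, ?_⟩
  · rw [hcoeff.1, hcoeff.2]; ring
  · rw [hcoeff.2, ← span_singleton_smul_eq hb.isUnit (t • v + w),
      show (t * b) • v + b • w = b • (t • v + w) by module]

theorem eq_of_apply_smul_add_eq_smul {f : Module.End E V} {α β t s : E}
    (hli : LinearIndependent E ![v, w]) (hfv : f v = α • v) (hfw : f w = β • w) (ht : t ≠ 0)
    (hs : f (t • v + w) = s • (t • v + w)) : β = α := by
  rw [map_add, map_smul, hfv, hfw] at hs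
  have hcoeff : t * α = s * t ∧ β = s := hli.eq_of_pair <| by
    linear_combination (norm := module) hs
  rw [hcoeff.2]
  exact (mul_right_cancel₀ ht (by rw [← hcoeff.1, mul_comm])).symm

end LinearAlgebra

namespace Representation

open Submodule

variable {G E V : Type*} [Group G] [Field E] [AddCommGroup V] [Module E V]
  (ρ : Representation E G V)

theorem exists_monoidHom_of_forall_apply_eq_smul {w : V} (hw : w ≠ 0)
    (hex : ∀ g, ∃ t : E, ρ g w = t • w) : ∃ χ : G →* Eˣ, ∀ g, ρ g w = (χ g : E) • w := by
  choose s hs using hex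
  have hcancel {a b : E} (h : a • w = b • w) : a = b := smul_left_injective E hw h
  have s_one : s 1 = 1 := hcancel (by rw [← hs, map_one, one_smul]; rfl)
  have s_mul (g g' : G) : s (g * g') = s g * s g' :=
    hcancel (by rw [← hs, map_mul, Module.End.mul_apply, hs, map_smul, hs, smul_smul, mul_comm])
  exact ⟨MonoidHom.toHomUnits ⟨⟨s, s_one⟩, s_mul⟩, hs⟩

theorem exists_extension_of_index_two {H : Subgroup G} (hH : H.index = 2) {c : G} (hc : c ∉ H)
    {χ : H →* Eˣ} {w : V} {t : E} (hw : w ≠ 0) (hχ : ∀ h : H, ρ h w = (χ h : E) • w)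
    (hct : ρ c w = t • w) :
    ∃ χ₁ : G →* Eˣ, (∀ h : H, χ₁ h = χ h) ∧ (χ₁ c : E) = t ∧ ∀ g, ρ g w = (χ₁ g : E) • w := by
  have hcancel {a b : E} (h : a • w = b • w) : a = b := smul_left_injective E hw h
  have hex (g : G) : ∃ s : E, ρ g w = s • w := by
    by_cases hg : g ∈ H
    · exact ⟨_, hχ ⟨g, hg⟩⟩
    · have hgc : g * c⁻¹ ∈ H := by
        rw [Subgroup.mul_mem_iff_of_index_two hH, inv_mem_iff]
        exact iff_of_false hg hc
      refine ⟨t * χ ⟨_, hgc⟩, ?_⟩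
      calc ρ g w = ρ (g * c⁻¹) (ρ c w) := by
            rw [← Module.End.mul_apply, ← map_mul, inv_mul_cancel_right]
        _ = _ := by rw [hct, map_smul, hχ ⟨_, hgc⟩, smul_smul]
  obtain ⟨χ₁, hχ₁⟩ := ρ.exists_monoidHom_of_forall_apply_eq_smul hw hex
  exact ⟨χ₁, fun h => Units.ext (hcancel (by rw [← hχ₁, hχ])),
    hcancel (by rw [← hχ₁, hct]), hχ₁⟩

section IndexTwo

variable {H : Subgroup G} {c : G} {χ : H →* Eˣ} {v : V}

theorem apply_apply_self_eq_smul (hH : H.index = 2) (heig : ∀ h : H, ρ h v = (χ h : E) • v) :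
    ρ c (ρ c v) = (χ ⟨c * c, Subgroup.mul_self_mem_of_index_two hH c⟩ : E) • v := by
  rw [← heig, map_mul, Module.End.mul_apply]

theorem apply_apply_eq_smul_conj (heig : ∀ h : H, ρ h v = (χ h : E) • v) {h : G}
    (hmem : c⁻¹ * h * c ∈ H) : ρ h (ρ c v) = (χ ⟨_, hmem⟩ : E) • ρ c v :=
  calc ρ h (ρ c v) = ρ c (ρ (c⁻¹ * h * c) v) := by
        simp only [← Module.End.mul_apply, ← map_mul, mul_assoc, mul_inv_cancel_left]
    _ = _ := by rw [heig ⟨_, hmem⟩, map_smul]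

theorem exists_apply_apply_eq_smul (hnorm : H.Normal) (heig : ∀ h : H, ρ h v = (χ h : E) • v)
    (h : H) : ∃ μ : E, ρ h (ρ c v) = μ • ρ c v :=
  ⟨_, ρ.apply_apply_eq_smul_conj heig (by simpa using hnorm.conj_mem _ h.2 c⁻¹)⟩

theorem apply_apply_eq_smul_of_conj_eq (hnorm : H.Normal)
    (heig : ∀ h : H, ρ h v = (χ h : E) • v)
    (hconj : ∀ h : H, χ ⟨c * h * c⁻¹, hnorm.conj_mem h.1 h.2 c⟩ = χ h) (h : H) :
    ρ h (ρ c v) = (χ h : E) • ρ c v := by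
  have hmem : c⁻¹ * h * c ∈ H := by simpa using hnorm.conj_mem _ h.2 c⁻¹
  have hχ : χ ⟨_, hmem⟩ = χ h := by
    rw [← hconj]
    congr 2
    group
  rw [← hχ]
  exact ρ.apply_apply_eq_smul_conj heig hmem

theorem exists_extension_apply_smul_add (hH : H.index = 2) (hc : c ∉ H)
    (heig : ∀ h : H, ρ h v = (χ h : E) • v) (hli : LinearIndependent E ![v, ρ c v])
    (hconj : ∀ h : H, ρ h (ρ c v) = (χ h : E) • ρ c v) {t : E}
    (ht : ρ c (ρ c v) = (t * t) • v) :
    ∃ χ₁ : G →* Eˣ, (∀ h : H, χ₁ h = χ h) ∧ (χ₁ c : E) = t ∧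
      ∀ g, ρ g (t • v + ρ c v) = (χ₁ g : E) • (t • v + ρ c v) := by
  refine ρ.exists_extension_of_index_two hH hc (smul_add_ne_zero_of_linearIndependent_pair hli t)
    (fun h => ?_) ?_
  · rw [map_add, map_smul, heig, hconj, smul_add, smul_comm]
  · rw [map_add, map_smul, ht, smul_add, smul_smul]
    abel

theorem exists_invariant_isCompl (hH : H.index = 2) (hnorm : H.Normal) (hc : c ∉ H)
    (h2 : (2 : E) ≠ 0) (heig : ∀ h : H, ρ h v = (χ h : E) • v)
    (hli : LinearIndependent E ![v, ρ c v]) (hspan : span E {v, ρ c v} = ⊤)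
    (W : Submodule E V) (hW : ∀ g, ∀ w ∈ W, ρ g w ∈ W) :
    ∃ W' : Submodule E V, (∀ g, ∀ w ∈ W', ρ g w ∈ W') ∧ IsCompl W W' := by
  by_cases hbot : W = ⊥
  · exact ⟨⊤, fun _ _ _ => mem_top, hbot ▸ isCompl_bot_top⟩
  by_cases htop : W = ⊤
  · exact ⟨⊥, fun g w hw => by simp_all, htop ▸ isCompl_top_bot⟩
  obtain ⟨u, hu, rfl⟩ := exists_eq_span_singleton_of_finrank_eq_two
    (finrank_eq_two_of_linearIndependent_pair hli hspan) hbot htop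
  have heigen {x : V} (hW : ∀ g, ρ g x ∈ E ∙ x) (g : G) : ∃ s : E, ρ g x = s • x :=
    (mem_span_singleton.mp (hW g)).imp fun _ hs => hs.symm
  obtain ⟨t, ht⟩ := heigen (fun g => hW g u (mem_span_singleton_self u)) c
  obtain ⟨hk, hline⟩ := eq_mul_self_and_span_eq_of_apply_eq_smul hli hspan rfl
    (ρ.apply_apply_self_eq_smul hH heig) hu ht
  have ht0 : t ≠ 0 := by
    rintro rfl
    exact Units.ne_zero _ (hk.trans (mul_zero 0))
  rw [hline] at hW ⊢
  -- an invariant line forces `ρ c v` to carry `χ` as well, i.e. `χ = χ^c`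
  have hconj (h : H) : ρ h (ρ c v) = (χ h : E) • ρ c v := by
    obtain ⟨μ, hμ⟩ := ρ.exists_apply_apply_eq_smul hnorm heig h
    obtain ⟨s, hs⟩ := heigen (fun g => hW g _ (mem_span_singleton_self _)) h
    rw [hμ, eq_of_apply_smul_add_eq_smul hli (heig h) hμ ht0 hs]
  obtain ⟨χ₂, -, -, hχ₂⟩ := ρ.exists_extension_apply_smul_add hH hc heig hli hconj (t := -t)
    (by rw [neg_mul_neg, ← hk, ρ.apply_apply_self_eq_smul hH heig])
  refine ⟨E ∙ ((-t) • v + ρ c v), fun g x hx => ?_,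
    isCompl_span_smul_add_of_ne hli hspan (ne_neg_of_two_ne_zero h2 ht0)⟩
  obtain ⟨a, rfl⟩ := mem_span_singleton.mp hx
  rw [map_smul, hχ₂]
  exact smul_mem _ _ (smul_mem _ _ (mem_span_singleton_self _))

end IndexTwo

end Representation

theorem stmt19_general (G : Type*) [Group G] (H : Subgroup G) (hH : H.index = 2)
    (hnorm : H.Normal) (c : G) (hc : c ∉ H)
    (E : Type*) [Field E] [IsAlgClosed E] (hchar2 : ringChar E ≠ 2)
    (χ : H →* Eˣ)
    (V : Type*) [AddCommGroup V] [Module E V] (ρ : Representation E G V)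
    (v : V)
    (heig : ∀ h : H, ρ (h : G) v = (χ h : E) • v)
    (hindep : LinearIndependent E ![v, ρ c v])
    (hspan : Submodule.span E {v, ρ c v} = ⊤) :
    -- `ρ` is semisimple: every invariant subspace has an invariant complement
    (∀ W : Submodule E V, (∀ g : G, ∀ w ∈ W, ρ g w ∈ W) →
      ∃ W' : Submodule E V, (∀ g : G, ∀ w ∈ W', ρ g w ∈ W') ∧
        W ⊓ W' = ⊥ ∧ W ⊔ W' = ⊤) ∧
    -- if `χ = χ^c`, then `ρ` is the direct sum of the two extensions of `χ` to `G`
    ((∀ h : H, χ ⟨c * h * c⁻¹, hnorm.conj_mem h.1 h.2 c⟩ = χ h) →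
      ∃ χ₁ χ₂ : G →* Eˣ, χ₁ ≠ χ₂ ∧
        (∀ h : H, χ₁ (h : G) = χ h) ∧ (∀ h : H, χ₂ (h : G) = χ h) ∧
        ∃ w₁ w₂ : V, w₁ ≠ 0 ∧ w₂ ≠ 0 ∧
          (∀ g : G, ρ g w₁ = (χ₁ g : E) • w₁) ∧
          (∀ g : G, ρ g w₂ = (χ₂ g : E) • w₂) ∧
          Submodule.span E {w₁} ⊔ Submodule.span E {w₂} = ⊤) := by
  have h2 : (2 : E) ≠ 0 := Ring.two_ne_zero hchar2
  refine ⟨fun W hW => ?_, fun hconj => ?_⟩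
  · obtain ⟨W', hW', hcompl⟩ := ρ.exists_invariant_isCompl hH hnorm hc h2 heig hindep hspan W hW
    exact ⟨W', hW', hcompl.inf_eq_bot, hcompl.sup_eq_top⟩
  have hcc := ρ.apply_apply_self_eq_smul hH heig (c := c)
  obtain ⟨t, ht⟩ := IsAlgClosed.exists_eq_mul_self
    (χ ⟨c * c, Subgroup.mul_self_mem_of_index_two hH c⟩ : E)
  have ht0 : t ≠ 0 := by
    rintro rfl
    exact Units.ne_zero _ (ht.trans (mul_zero 0))
  have hconj' := ρ.apply_apply_eq_smul_of_conj_eq hnorm heig hconj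
  obtain ⟨χ₁, hχ₁H, hχ₁c, hχ₁⟩ := ρ.exists_extension_apply_smul_add hH hc heig hindep hconj'
    (t := t) (by rw [hcc, ht])
  obtain ⟨χ₂, hχ₂H, hχ₂c, hχ₂⟩ := ρ.exists_extension_apply_smul_add hH hc heig hindep hconj'
    (t := -t) (by rw [hcc, ht, neg_mul_neg])
  have hne := ne_neg_of_two_ne_zero h2 ht0
  exact ⟨χ₁, χ₂, fun h => hne (by rw [← hχ₂c, ← h, hχ₁c]), hχ₁H, hχ₂H, _, _,
    smul_add_ne_zero_of_linearIndependent_pair hindep t,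
    smul_add_ne_zero_of_linearIndependent_pair hindep (-t), hχ₁, hχ₂,
    (isCompl_span_smul_add_of_ne hindep hspan hne).sup_eq_top⟩

/-- Let `G` be a group, `H` an index-2 subgroup, `c ∈ G \ H`, `E` an algebraically
closed field of characteristic `≠ 2` not dividing the order of the (finite) image of a
homomorphism `χ : H → Eˣ`.  Then the induced representation `ρ = Ind_H^G χ` —
realized concretely as a representation on `V` with vector `v ≠ 0` on which `H` acts
through `χ` and such that `(v, ρ c v)` is a basis of `V` — is semisimple; moreover if
`χ = χ^c` then `ρ` is isomorphic to a direct sum of two characters of `G`, namely two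
distinct extensions of `χ` to `G`. -/
theorem stmt19 (G : Type*) [Group G] (H : Subgroup G) (hH : H.index = 2)
    (hnorm : H.Normal) (c : G) (hc : c ∉ H)
    (E : Type*) [Field E] [IsAlgClosed E] (hchar2 : ringChar E ≠ 2)
    (χ : H →* Eˣ) (hfin : (Set.range χ).Finite)
    (hcharim : ¬ (ringChar E ∣ Nat.card (Set.range χ)))
    (V : Type*) [AddCommGroup V] [Module E V] (ρ : Representation E G V)
    (v : V) (hv : v ≠ 0)
    (heig : ∀ h : H, ρ (h : G) v = (χ h : E) • v)
    (hindep : LinearIndependent E ![v, ρ c v])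
    (hspan : Submodule.span E {v, ρ c v} = ⊤) :
    -- `ρ` is semisimple: every invariant subspace has an invariant complement
    (∀ W : Submodule E V, (∀ g : G, ∀ w ∈ W, ρ g w ∈ W) →
      ∃ W' : Submodule E V, (∀ g : G, ∀ w ∈ W', ρ g w ∈ W') ∧
        W ⊓ W' = ⊥ ∧ W ⊔ W' = ⊤) ∧
    -- if `χ = χ^c`, then `ρ` is the direct sum of the two extensions of `χ` to `G`
    ((∀ h : H, χ ⟨c * h * c⁻¹, hnorm.conj_mem h.1 h.2 c⟩ = χ h) →
      ∃ χ₁ χ₂ : G →* Eˣ, χ₁ ≠ χ₂ ∧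
        (∀ h : H, χ₁ (h : G) = χ h) ∧ (∀ h : H, χ₂ (h : G) = χ h) ∧
        ∃ w₁ w₂ : V, w₁ ≠ 0 ∧ w₂ ≠ 0 ∧
          (∀ g : G, ρ g w₁ = (χ₁ g : E) • w₁) ∧
          (∀ g : G, ρ g w₂ = (χ₂ g : E) • w₂) ∧
          Submodule.span E {w₁} ⊔ Submodule.span E {w₂} = ⊤) :=
  stmt19_general G H hH hnorm c hc E hchar2 χ V ρ v heig hindep hspan
end
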